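/- For all positive integers d, r, k with r ≥ 2, every family of k-element sets with Littlestone dimension at most d and cardinality at least (rk)^d contains an r-sunflower. -/

import Mathlib

/-!
Induction on `d + k`. A greedily chosen maximal pairwise disjoint subfamily either has `r`
members (a sunflower with empty kernel) or its union `Y` has fewer than `rk` points and meets
every member of `F`; then some `x ∈ Y` lies in more than `(rk)^(d-1)` members. Splitting `F` at
`x`: if the link `F_x` has Littlestone dimension `< d`, it is large enough for the induction
hypothesis at `(d - 1, k - 1)`; otherwise `F'_x` has dimension `< d`, and either it is large
(induction at `(d - 1, k)`) or it is small, and then the link is large enough for the induction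
hypothesis at `(d, k - 1)`. A sunflower in the link lifts to `F` by adding `x` back.
-/

open Finset

variable {α : Type*}

/-- An `r`-sunflower: `r` distinct sets with pairwise equal intersections. -/
def IsSunflower [DecidableEq α] (r : ℕ) (𝒮 : Finset (Finset α)) : Prop :=
  𝒮.card = r ∧ ∃ C : Finset α, ∀ A ∈ 𝒮, ∀ B ∈ 𝒮, A ≠ B → A ∩ B = C

/-- The family `F` contains an `r`-sunflower. -/
def HasSunflower [DecidableEq α] (F : Finset (Finset α)) (r : ℕ) : Prop :=
  ∃ 𝒮 ⊆ F, IsSunflower r 𝒮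

/-- `F` shatters `S`: every subset of `S` is the trace of some member of `F` on `S`. -/
def ShattersFam [DecidableEq α] (F : Finset (Finset α)) (S : Finset α) : Prop :=
  ∀ B ⊆ S, ∃ A ∈ F, A ∩ S = B

/-- The VC-dimension of `F` is at most `d`. -/
def VCdimLE [DecidableEq α] (F : Finset (Finset α)) (d : ℕ) : Prop :=
  ∀ S : Finset α, ShattersFam F S → S.card ≤ d

/-- The Littlestone dimension of `F` is at most `d` (recursive definition). -/
def LdimLE [DecidableEq α] : ℕ → Finset (Finset α) → Prop
  | 0, F => F.card ≤ 1
  | d + 1, F => F.card ≤ 1 ∨ ∀ x : α,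
      LdimLE d ((F.filter (fun S => x ∈ S)).image (fun S => S.erase x)) ∨
      LdimLE d (F.filter (fun S => x ∉ S))

/-- `λ(G) ≥ l`: there are `l` distinct sets in `G` such that every pair has a
private common element, belonging to no other of the `l` sets. -/
def HasLambda [DecidableEq α] (G : Finset (Finset α)) (l : ℕ) : Prop :=
  ∃ S : Fin l → Finset α, (∀ i, S i ∈ G) ∧ Function.Injective S ∧
    ∀ i j : Fin l, i < j → ∃ v, v ∈ S i ∧ v ∈ S j ∧
      ∀ t : Fin l, t ≠ i → t ≠ j → v ∉ S t

variable [DecidableEq α]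

/-- The link `F_x` of the family `F` at `x`. -/
def link (F : Finset (Finset α)) (x : α) : Finset (Finset α) :=
  (F.filter (x ∈ ·)).image (·.erase x)

lemma card_link (F : Finset (Finset α)) (x : α) :
    (link F x).card = (F.filter (x ∈ ·)).card :=
  card_image_of_injOn fun A hA B hB hAB => by
    rw [← insert_erase (mem_filter.1 hA).2, ← insert_erase (mem_filter.1 hB).2]
    exact congrArg (insert x) hAB

lemma card_of_mem_link {F : Finset (Finset α)} {x : α} {k : ℕ} (hsz : ∀ S ∈ F, S.card = k)
    {T : Finset α} (hT : T ∈ link F x) : T.card = k - 1 := by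
  obtain ⟨S, hS, rfl⟩ := mem_image.1 hT
  rw [card_erase_of_mem (mem_filter.1 hS).2, hsz S (mem_filter.1 hS).1]

lemma link_image_erase_self (F : Finset (Finset α)) (x : α) :
    link (F.image (·.erase x)) x = ∅ := by
  simp [link, filter_image]

lemma link_image_erase {F : Finset (Finset α)} {x y : α} (hyx : y ≠ x) :
    link (F.image (·.erase x)) y = (link F y).image (·.erase x) := by
  simp only [link, filter_image, image_image, mem_erase, hyx, ne_eq, not_false_eq_true,
    true_and]
  exact image_congr fun S _ => erase_right_comm

lemma filter_notMem_image_erase {F : Finset (Finset α)} {x y : α} (hyx : y ≠ x) :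
    (F.image (·.erase x)).filter (y ∉ ·) = (F.filter (y ∉ ·)).image (·.erase x) := by
  simp [filter_image, hyx]

namespace LdimLE

lemma of_card_le_one : ∀ {d : ℕ} {F : Finset (Finset α)}, F.card ≤ 1 → LdimLE d F
  | 0, _, h => h
  | _ + 1, _, h => Or.inl h

lemma mono : ∀ {d : ℕ} {F G : Finset (Finset α)}, G ⊆ F → LdimLE d F → LdimLE d G
  | 0, _, _, hGF, h => (card_le_card hGF).trans h
  | _ + 1, _, _, hGF, Or.inl h => Or.inl ((card_le_card hGF).trans h)
  | _ + 1, _, _, hGF, Or.inr h => Or.inr fun x =>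
      (h x).imp (mono (image_subset_image (filter_subset_filter _ hGF)))
        (mono (filter_subset_filter _ hGF))

lemma image_erase {x : α} : ∀ {d : ℕ} {F : Finset (Finset α)}, (∀ S ∈ F, x ∈ S) →
    LdimLE d F → LdimLE d (F.image (·.erase x))
  | 0, _, _, h => card_image_le.trans h
  | _ + 1, _, _, Or.inl h => Or.inl (card_image_le.trans h)
  | _ + 1, F, hx, Or.inr h => Or.inr fun y => by
      rcases eq_or_ne y x with rfl | hyx
      · left
        change LdimLE _ (link _ y)
        rw [link_image_erase_self]
        exact of_card_le_one (by simp)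
      · refine (h y).imp (fun hL => ?_) (fun hN => ?_)
        · change LdimLE _ (link _ y)
          rw [link_image_erase hyx]
          refine image_erase (fun T hT => ?_) hL
          obtain ⟨S, hS, rfl⟩ := mem_image.1 hT
          exact mem_erase.2 ⟨hyx.symm, hx S (mem_filter.1 hS).1⟩
        · rw [filter_notMem_image_erase hyx]
          exact image_erase (fun S hS => hx S (mem_filter.1 hS).1) hN

lemma link {d : ℕ} {F : Finset (Finset α)} (h : LdimLE d F) (x : α) : LdimLE d (link F x) :=
  (h.mono (filter_subset _ _)).image_erase fun _ hS => (mem_filter.1 hS).2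

end LdimLE

lemma IsSunflower.image_insert {r : ℕ} {𝒮 : Finset (Finset α)} {x : α} (h𝒮 : IsSunflower r 𝒮)
    (hx : ∀ T ∈ 𝒮, x ∉ T) : IsSunflower r (𝒮.image (insert x)) := by
  obtain ⟨hcard, C, hC⟩ := h𝒮
  have hinj : Set.InjOn (insert x) (𝒮 : Set (Finset α)) := fun A hA B hB hAB => by
    rw [← erase_insert (hx A hA), hAB, erase_insert (hx B hB)]
  refine ⟨(card_image_of_injOn hinj).trans hcard, insert x C, ?_⟩
  simp only [mem_image]
  rintro _ ⟨A, hA, rfl⟩ _ ⟨B, hB, rfl⟩ hne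
  rw [← insert_inter_distrib, hC A hA B hB (ne_of_apply_ne _ hne)]

lemma HasSunflower.mono {F G : Finset (Finset α)} {r : ℕ} (hGF : G ⊆ F)
    (h : HasSunflower G r) : HasSunflower F r :=
  let ⟨𝒮, h𝒮, hsf⟩ := h
  ⟨𝒮, h𝒮.trans hGF, hsf⟩

lemma HasSunflower.of_link {F : Finset (Finset α)} {x : α} {r : ℕ}
    (h : HasSunflower (link F x) r) : HasSunflower F r := by
  obtain ⟨𝒮, h𝒮, hsf⟩ := h
  refine ⟨𝒮.image (insert x), fun _ hT' => ?_, hsf.image_insert fun T hT => ?_⟩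
  · obtain ⟨T, hT, rfl⟩ := mem_image.1 hT'
    obtain ⟨S, hS, rfl⟩ := mem_image.1 (h𝒮 hT)
    rw [insert_erase (mem_filter.1 hS).2]
    exact (mem_filter.1 hS).1
  · obtain ⟨S, -, rfl⟩ := mem_image.1 (h𝒮 hT)
    exact notMem_erase x S

lemma hasSunflower_of_pairwiseDisjoint {F D : Finset (Finset α)} {r : ℕ} (hDF : D ⊆ F)
    (hD : (D : Set (Finset α)).PairwiseDisjoint id) (hr : r ≤ D.card) : HasSunflower F r := by
  obtain ⟨𝒮, h𝒮D, rfl⟩ := exists_subset_card_eq hr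
  exact ⟨𝒮, h𝒮D.trans hDF, rfl, ∅, fun A hA B hB hAB =>
    disjoint_iff_inter_eq_empty.1 (hD (h𝒮D hA) (h𝒮D hB) hAB)⟩

lemma hasSunflower_of_card_eq_one {F : Finset (Finset α)} {r : ℕ} (hsz : ∀ S ∈ F, S.card = 1)
    (hr : r ≤ F.card) : HasSunflower F r := by
  refine hasSunflower_of_pairwiseDisjoint subset_rfl (fun A hA B hB hAB => ?_) hr
  obtain ⟨a, rfl⟩ := card_eq_one.1 (hsz A hA)
  obtain ⟨b, rfl⟩ := card_eq_one.1 (hsz B hB)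
  exact disjoint_singleton.2 fun hab => hAB (by rw [hab])

lemma exists_pairwiseDisjoint_subset_forall_not_disjoint (F : Finset (Finset α))
    (hne : ∀ S ∈ F, S.Nonempty) :
    ∃ D ⊆ F, (D : Set (Finset α)).PairwiseDisjoint id ∧ ∀ S ∈ F, ∃ A ∈ D, ¬Disjoint S A := by
  induction F using Finset.induction_on with
  | empty => exact ⟨∅, subset_rfl, by simp, by simp⟩
  | insert S F _ ih =>
    obtain ⟨D, hDF, hD, hmeet⟩ := ih fun T hT => hne T (mem_insert_of_mem hT)
    by_cases hS : ∃ A ∈ D, ¬Disjoint S A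
    · exact ⟨D, hDF.trans (subset_insert _ _), hD, forall_mem_insert _ _ _ |>.2 ⟨hS, hmeet⟩⟩
    · simp only [not_exists, not_and, not_not] at hS
      refine ⟨insert S D, insert_subset_insert _ hDF, ?_, forall_mem_insert _ _ _ |>.2
        ⟨⟨S, mem_insert_self _ _, fun h => (hne S (mem_insert_self _ _)).ne_empty
          ((disjoint_self_iff_empty S).1 h)⟩,
          fun T hT => (hmeet T hT).imp fun A hA => ⟨mem_insert_of_mem hA.1, hA.2⟩⟩⟩
      rw [coe_insert]
      exact hD.insert fun A hA _ => hS A hA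

lemma hasSunflower_or_exists_transversal {F : Finset (Finset α)} {k : ℕ} (r : ℕ) (hk : 0 < k)
    (hsz : ∀ S ∈ F, S.card = k) :
    HasSunflower F r ∨ ∃ Y : Finset α, Y.card < r * k ∧ ∀ S ∈ F, (S ∩ Y).Nonempty := by
  obtain ⟨D, hDF, hD, hmeet⟩ := exists_pairwiseDisjoint_subset_forall_not_disjoint F
    fun S hS => card_pos.1 (hsz S hS ▸ hk)
  by_cases hr : r ≤ D.card
  · exact .inl (hasSunflower_of_pairwiseDisjoint hDF hD hr)
  refine .inr ⟨D.biUnion id, ?_, fun S hS => ?_⟩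
  · calc (D.biUnion id).card ≤ D.card * k :=
          card_biUnion_le_card_mul _ _ _ fun A hA => (hsz A (hDF hA)).le
      _ < r * k := Nat.mul_lt_mul_of_pos_right (not_le.1 hr) hk
  · obtain ⟨A, hA, hSA⟩ := hmeet S hS
    obtain ⟨a, haS, haA⟩ := not_disjoint_iff.1 hSA
    exact ⟨a, mem_inter.2 ⟨haS, mem_biUnion.2 ⟨A, hA, haA⟩⟩⟩

lemma exists_lt_card_filter_mem {F : Finset (Finset α)} {Y : Finset α} {m : ℕ}
    (hY : ∀ S ∈ F, (S ∩ Y).Nonempty) (h : Y.card * m < F.card) :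
    ∃ x, m < (F.filter (x ∈ ·)).card := by
  have hcover : F ⊆ Y.biUnion fun x => F.filter (x ∈ ·) := fun S hS => by
    obtain ⟨x, hx⟩ := hY S hS
    exact mem_biUnion.2 ⟨x, (mem_inter.1 hx).2, mem_filter.2 ⟨hS, (mem_inter.1 hx).1⟩⟩
  have hsum : ∑ _ ∈ Y, m < ∑ x ∈ Y, (F.filter (x ∈ ·)).card := by
    rw [sum_const, smul_eq_mul]
    exact h.trans_le ((card_le_card hcover).trans card_biUnion_le)
  obtain ⟨x, -, hx⟩ := exists_lt_of_sum_lt hsum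
  exact ⟨x, hx⟩

lemma pow_succ_add_pow_le_pow_succ {a b : ℕ} (hab : a < b) (d : ℕ) :
    a ^ (d + 1) + b ^ d ≤ b ^ (d + 1) :=
  calc a ^ (d + 1) + b ^ d = a ^ d * a + b ^ d := by rw [pow_succ]
    _ ≤ b ^ d * a + b ^ d := by gcongr
    _ = b ^ d * (a + 1) := by ring
    _ ≤ b ^ d * b := by gcongr; exact hab
    _ = b ^ (d + 1) := (pow_succ _ _).symm

lemma hasSunflower_or_exists_lt_card_filter_mem {F : Finset (Finset α)} {r k m : ℕ}
    (hk : 0 < k) (hsz : ∀ S ∈ F, S.card = k) (hm : 0 < m) (hcard : r * k * m ≤ F.card) :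
    HasSunflower F r ∨ ∃ x, m < (F.filter (x ∈ ·)).card := by
  obtain hsf | ⟨Y, hYcard, hY⟩ := hasSunflower_or_exists_transversal r hk hsz
  · exact .inl hsf
  exact .inr (exists_lt_card_filter_mem hY
    ((Nat.mul_lt_mul_of_pos_right hYcard hm).trans_le hcard))

/- `1 < F.card` replaces `1 ≤ d` and `1 ≤ k`: unlike them it survives the induction steps, and
it makes the cases `d = 0` and `k = 0` vacuous. -/
lemma hasSunflower_of_ldimLE {r : ℕ} (hr : 2 ≤ r) {d k : ℕ} {F : Finset (Finset α)}
    (hsz : ∀ S ∈ F, S.card = k) (hls : LdimLE d F) (hcard : (r * k) ^ d ≤ F.card)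
    (hF : 1 < F.card) : HasSunflower F r := by
  obtain ⟨d, rfl⟩ : ∃ d', d = d' + 1 :=
    Nat.exists_eq_succ_of_ne_zero fun hd => hF.not_ge (by subst hd; exact hls)
  obtain ⟨k, rfl⟩ : ∃ k', k = k' + 1 := Nat.exists_eq_succ_of_ne_zero fun hk => by
    subst hk
    refine hF.not_ge (card_le_one.2 fun A hA B hB => ?_)
    rw [card_eq_zero.1 (hsz A hA), card_eq_zero.1 (hsz B hB)]
  obtain rfl | hk := k.eq_zero_or_pos
  · exact hasSunflower_of_card_eq_one hsz
      ((Nat.le_self_pow (Nat.succ_ne_zero d) r).trans (by simpa using hcard))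
  have hmn : r * k < r * (k + 1) := by nlinarith
  have hpos : 0 < (r * (k + 1)) ^ d := by positivity
  obtain hsf | ⟨x, hx⟩ := hasSunflower_or_exists_lt_card_filter_mem (by omega) hsz hpos
    (by rwa [← pow_succ'])
  · exact hsf
  have hsz_link : ∀ T ∈ link F x, T.card = k := fun _ hT => card_of_mem_link hsz hT
  have hsplit : (F.filter (x ∈ ·)).card + (F.filter (x ∉ ·)).card = F.card :=
    card_filter_add_card_filter_not _
  rw [← card_link] at hx hsplit
  obtain hL | hN := (Or.resolve_left hls hF.not_ge) x
  · exact (hasSunflower_of_ldimLE hr hsz_link hL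
      ((Nat.pow_le_pow_left hmn.le d).trans hx.le) (by omega)).of_link
  by_cases hNcard : (r * (k + 1)) ^ d < (F.filter (x ∉ ·)).card
  · exact (hasSunflower_of_ldimLE hr (F := F.filter (x ∉ ·))
      (fun S hS => hsz S (mem_filter.1 hS).1) hN hNcard.le (by omega)).mono (filter_subset _ _)
  · have hbound := pow_succ_add_pow_le_pow_succ hmn d
    have hlarge : r * k ≤ (r * k) ^ (d + 1) := Nat.le_self_pow (Nat.succ_ne_zero d) _
    have hrk : 2 ≤ r * k := by nlinarith
    exact (hasSunflower_of_ldimLE hr hsz_link (hls.link x) (by omega) (by omega)).of_link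
termination_by d + k

theorem littlestone_sunflower {α : Type*} [DecidableEq α] (d r k : ℕ)
    (hd : 1 ≤ d) (hr : 2 ≤ r) (hk : 1 ≤ k) (F : Finset (Finset α))
    (hsz : ∀ S ∈ F, S.card = k) (hls : LdimLE d F)
    (hcard : (r * k) ^ d ≤ F.card) : HasSunflower F r := by
  refine hasSunflower_of_ldimLE hr hsz hls hcard (lt_of_lt_of_le ?_ hcard)
  calc 1 < r * k := by nlinarith
    _ ≤ (r * k) ^ d := Nat.le_self_pow (by omega) _
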